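/- Let 𝔛 be a symmetric association scheme of class d ≥ 2. Then the following are equivalent: (1) 𝔛 is a Q-polynomial scheme with respect to E_1, i.e., Q-polynomial with respect to some ordering E_0, E_1, E_{i_2}, …, E_{i_d}; (2) the cardinality of N_d is equal to 1; (3) N_d is nonempty. -/

import Mathlib

open Matrix BigOperators Finset

/-- A symmetric association scheme of class `d` on a finite vertex set `V`,
bundled together with its adjacency matrices, primitive idempotents,
eigenmatrices `P`, `Q` and Krein parameters. -/
structure SymmAssocScheme (d : ℕ) (V : Type*) [Fintype V] [DecidableEq V] where
  /-- the relations `R_0, …, R_d` -/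
  R : Fin (d + 1) → Set (V × V)
  R_nonempty : ∀ i, (R i).Nonempty
  R_zero : R 0 = {p : V × V | p.1 = p.2}
  R_cover : ∀ p : V × V, ∃ i, p ∈ R i
  R_disjoint : ∀ i j, i ≠ j → R i ∩ R j = ∅
  R_symm : ∀ i, ∀ x y : V, (x, y) ∈ R i → (y, x) ∈ R i
  /-- the intersection numbers `p_{ij}^k` -/
  pnum : Fin (d + 1) → Fin (d + 1) → Fin (d + 1) → ℕ
  pnum_spec : ∀ i j k, ∀ x y : V, (x, y) ∈ R k →
    pnum i j k = {z : V | (x, z) ∈ R i ∧ (z, y) ∈ R j}.ncard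
  /-- the adjacency matrices `A_0, …, A_d` -/
  A : Fin (d + 1) → Matrix V V ℂ
  A_of_mem : ∀ i, ∀ x y : V, (x, y) ∈ R i → A i x y = 1
  A_of_not_mem : ∀ i, ∀ x y : V, (x, y) ∉ R i → A i x y = 0
  /-- the primitive idempotents `E_0, …, E_d` -/
  E : Fin (d + 1) → Matrix V V ℂ
  E_zero : E 0 = (Fintype.card V : ℂ)⁻¹ • Matrix.of (fun _ _ => (1 : ℂ))
  E_sum : ∑ i, E i = (1 : Matrix V V ℂ)
  E_mul : ∀ i j, E i * E j = if i = j then E i else 0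
  E_ne_zero : ∀ i, E i ≠ 0
  /-- the first eigenmatrix: `P i j = p_i(j)` -/
  P : Fin (d + 1) → Fin (d + 1) → ℝ
  /-- the second eigenmatrix: `Q i j = q_i(j)`; in particular `θ*_j = Q 1 j` -/
  Q : Fin (d + 1) → Fin (d + 1) → ℝ
  A_eq : ∀ i, A i = ∑ j, (P i j : ℂ) • E j
  E_eq : ∀ i, E i = (Fintype.card V : ℂ)⁻¹ • ∑ j, (Q i j : ℂ) • A j
  /-- the Krein parameters `q_{ij}^k` -/
  krein : Fin (d + 1) → Fin (d + 1) → Fin (d + 1) → ℝ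
  krein_spec : ∀ i j, Matrix.hadamard (E i) (E j) =
    (Fintype.card V : ℂ)⁻¹ • ∑ k, (krein i j k : ℂ) • E k
  krein_nonneg : ∀ i j k, 0 ≤ krein i j k

namespace SymmAssocScheme

variable {d : ℕ} {V : Type*} [Fintype V] [DecidableEq V]

/-- the `h`-fold Hadamard power `E_1^{∘h}` of `E_1`, with `E_1^{∘0} = J`
the all-ones matrix. -/
noncomputable def hadPowE1 (S : SymmAssocScheme d V) : ℕ → Matrix V V ℂ
  | 0 => Matrix.of fun _ _ => 1
  | n + 1 => Matrix.hadamard (hadPowE1 S n) (S.E 1)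

/-- `N h` is the set of indices `j` such that `E_j` is a component of `E_1^{∘h}`
(i.e. `E_j · E_1^{∘h} ≠ 0`) but not a component of `E_1^{∘l}` for any `l < h`. -/
def N (S : SymmAssocScheme d V) (h : ℕ) : Set (Fin (d + 1)) :=
  {j | S.E j * S.hadPowE1 h ≠ 0 ∧ ∀ l < h, S.E j * S.hadPowE1 l = 0}

/-- `𝔛` is `Q`-polynomial with respect to the ordering `E_{σ 0}, E_{σ 1}, …, E_{σ d}`:
for each `h` there is a polynomial `v*_h` of degree exactly `h` with
`q_{σ h}(j) = v*_h(q_1(j))` for all `j`. -/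
def IsQPolyOrdering (S : SymmAssocScheme d V) (σ : Equiv.Perm (Fin (d + 1))) : Prop :=
  ∀ h : Fin (d + 1), ∃ v : Polynomial ℝ, v.degree = (h : ℕ) ∧
    ∀ j, S.Q (σ h) j = v.eval (S.Q 1 j)

/-- `𝔛` is `Q`-polynomial with respect to `E_1`: it is `Q`-polynomial with respect
to some ordering of the form `E_0, E_1, E_{i_2}, …, E_{i_d}`. -/
def IsQPolyE1 (S : SymmAssocScheme d V) : Prop :=
  ∃ σ : Equiv.Perm (Fin (d + 1)), σ 0 = 0 ∧ σ 1 = 1 ∧ S.IsQPolyOrdering σ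

/-- `𝔛` is `P`-polynomial with respect to the ordering `A_{σ 0}, A_{σ 1}, …, A_{σ d}`. -/
def IsPPolyOrdering (S : SymmAssocScheme d V) (σ : Equiv.Perm (Fin (d + 1))) : Prop :=
  ∀ h : Fin (d + 1), ∃ v : Polynomial ℝ, v.degree = (h : ℕ) ∧
    ∀ j, S.P (σ h) j = v.eval (S.P 1 j)

/-- `𝔛` is `P`-polynomial with respect to `A_1`. -/
def IsPPolyA1 (S : SymmAssocScheme d V) : Prop :=
  ∃ σ : Equiv.Perm (Fin (d + 1)), σ 0 = 0 ∧ σ 1 = 1 ∧ S.IsPPolyOrdering σ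

/-- the ratio `K_i = ∏_{j=1, j≠i}^d (θ*_0 − θ*_j)/(θ*_i − θ*_j)`,
where `θ*_j = q_1(j)`. -/
noncomputable def K (S : SymmAssocScheme d V) (i : Fin (d + 1)) : ℝ :=
  ∏ j ∈ Finset.univ.filter (fun j => j ≠ 0 ∧ j ≠ i),
    (S.Q 1 0 - S.Q 1 j) / (S.Q 1 i - S.Q 1 j)

/-!
Write `E_1^{∘h} = ∑_k c_h(k) E_k`. Since `E_k ∘ E_1 = |X|⁻¹ ∑_m q_{k1}^m E_m`, the coefficients
obey `c_{h+1}(m) = |X|⁻¹ ∑_k c_h(k) q_{k1}^m`, and Krein nonnegativity makes every term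
nonnegative: `E_m` is a component of `E_1^{∘(h+1)}` iff `q_{k1}^m ≠ 0` for some component `E_k`
of `E_1^{∘h}`. Hence once some `N_h` is empty so are all later ones, and `N_d ≠ ∅` makes
`N_0, …, N_d` disjoint nonempty subsets of the `d + 1` indices, i.e. singletons `{i_h}`.

Comparing with `E_1^{∘h} = ∑_j (q_1(j)/|X|)^h A_j` gives `∑_k c_h(k) q_k(j) = |X| (q_1(j)/|X|)^h`,
so `q_{i_h}` is a polynomial of degree `h` in `q_1` by induction on `h`. Conversely, for a
`Q`-polynomial ordering, expanding `v*_h` in powers of `q_1` and using that the rows of `Q` are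
linearly independent shows that `i_d` first occurs in `E_1^{∘d}`.
-/

open Polynomial

variable (S : SymmAssocScheme d V)

lemma card_ne_zero (S : SymmAssocScheme d V) : (Fintype.card V : ℝ) ≠ 0 := by
  obtain ⟨p, -⟩ := S.R_nonempty 0
  exact Nat.cast_ne_zero.mpr (Fintype.card_pos_iff.mpr ⟨p.1⟩).ne'

lemma sum_smul_A_apply (c : Fin (d + 1) → ℂ) {i : Fin (d + 1)} {x y : V} (h : (x, y) ∈ S.R i) :
    (∑ j, c j • S.A j) x y = c i := by
  rw [Matrix.sum_apply, Finset.sum_eq_single i]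
  · simp [S.A_of_mem i x y h]
  · intro j _ hj
    have hxy : (x, y) ∉ S.R j := fun hj' => by
      simpa [S.R_disjoint j i hj] using Set.mem_inter hj' h
    simp [S.A_of_not_mem j x y hxy]
  · simp

lemma sum_A : ∑ j, S.A j = Matrix.of fun _ _ => (1 : ℂ) := by
  ext x y
  obtain ⟨i, hi⟩ := S.R_cover (x, y)
  simpa using S.sum_smul_A_apply (fun _ => 1) hi

lemma E_mul_sum_smul_E (c : Fin (d + 1) → ℂ) (i : Fin (d + 1)) :
    S.E i * ∑ k, c k • S.E k = c i • S.E i := by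
  rw [Matrix.mul_sum, Finset.sum_eq_single i]
  · rw [Matrix.mul_smul, S.E_mul, if_pos rfl]
  · intro k _ hk
    rw [Matrix.mul_smul, S.E_mul, if_neg hk.symm, smul_zero]
  · simp

lemma sum_smul_E_injective {a b : Fin (d + 1) → ℂ}
    (h : ∑ k, a k • S.E k = ∑ k, b k • S.E k) : a = b := by
  funext i
  have hi := congrArg (S.E i * ·) h
  simp only [S.E_mul_sum_smul_E] at hi
  exact smul_left_injective ℂ (S.E_ne_zero i) hi

lemma sum_smul_E_eq_sum_smul_A (a : Fin (d + 1) → ℝ) :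
    ∑ k, (a k : ℂ) • S.E k =
      (Fintype.card V : ℂ)⁻¹ • ∑ j, ((∑ k, a k * S.Q k j : ℝ) : ℂ) • S.A j := by
  simp only [S.E_eq, Finset.smul_sum, smul_smul, Complex.ofReal_sum, Complex.ofReal_mul,
    Finset.sum_smul]
  rw [Finset.sum_comm]
  congr! 2 with k - j -
  congr 1
  ring

lemma eq_of_forall_sum_mul_Q_eq {a b : Fin (d + 1) → ℝ}
    (h : ∀ j, ∑ k, a k * S.Q k j = ∑ k, b k * S.Q k j) : a = b := by
  have hab := S.sum_smul_E_injective (a := fun k => (a k : ℂ)) (b := fun k => (b k : ℂ))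
    (by simp only [S.sum_smul_E_eq_sum_smul_A, h])
  funext k
  exact_mod_cast congrFun hab k

lemma hadPowE1_eq_sum_smul_A (h : ℕ) :
    S.hadPowE1 h = ∑ j, (((S.Q 1 j / Fintype.card V) ^ h : ℝ) : ℂ) • S.A j := by
  induction h with
  | zero => simpa [hadPowE1] using S.sum_A.symm
  | succ h ih =>
    ext x y
    obtain ⟨i, hi⟩ := S.R_cover (x, y)
    rw [hadPowE1, Matrix.hadamard_apply, ih, S.E_eq 1, Matrix.smul_apply,
      S.sum_smul_A_apply _ hi, S.sum_smul_A_apply _ hi, S.sum_smul_A_apply _ hi]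
    push_cast
    ring

noncomputable def hadPowE1Coeff (S : SymmAssocScheme d V) : ℕ → Fin (d + 1) → ℝ
  | 0 => fun k => if k = 0 then (Fintype.card V : ℝ) else 0
  | h + 1 => fun k => (Fintype.card V : ℝ)⁻¹ * ∑ j, S.hadPowE1Coeff h j * S.krein j 1 k

lemma hadPowE1Coeff_nonneg (h : ℕ) (k : Fin (d + 1)) : 0 ≤ S.hadPowE1Coeff h k := by
  induction h generalizing k with
  | zero => unfold hadPowE1Coeff; split_ifs <;> positivity
  | succ h ih =>
    exact mul_nonneg (by positivity)
      (Finset.sum_nonneg fun j _ => mul_nonneg (ih j) (S.krein_nonneg j 1 k))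

lemma hadPowE1_eq_sum_smul_E (h : ℕ) :
    S.hadPowE1 h = ∑ k, (S.hadPowE1Coeff h k : ℂ) • S.E k := by
  induction h with
  | zero =>
    simp only [hadPowE1, hadPowE1Coeff, apply_ite, Complex.ofReal_natCast, Complex.ofReal_zero,
      ite_smul, zero_smul, Finset.sum_ite_eq', Finset.mem_univ, if_true, S.E_zero, smul_smul]
    rw [mul_inv_cancel₀ (by exact_mod_cast S.card_ne_zero), one_smul]
  | succ h ih =>
    have hkrein : ∀ k x y, S.E k x y * S.E 1 x y =
        (Fintype.card V : ℂ)⁻¹ * ∑ m, (S.krein k 1 m : ℂ) * S.E m x y := fun k x y => by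
      simpa [Matrix.sum_apply] using congrFun (congrFun (S.krein_spec k 1) x) y
    ext x y
    simp only [hadPowE1, Matrix.hadamard_apply, ih, Matrix.sum_apply, Matrix.smul_apply,
      smul_eq_mul, Finset.sum_mul, mul_assoc, hkrein, hadPowE1Coeff, Finset.mul_sum]
    push_cast
    rw [Finset.sum_comm]
    simp only [Finset.sum_mul]
    congr! 2
    ring

lemma sum_hadPowE1Coeff_mul_Q (h : ℕ) (j : Fin (d + 1)) :
    ∑ k, S.hadPowE1Coeff h k * S.Q k j = Fintype.card V * (S.Q 1 j / Fintype.card V) ^ h := by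
  obtain ⟨⟨x, y⟩, hxy⟩ := S.R_nonempty j
  have hE := congrFun (congrFun
    ((S.hadPowE1_eq_sum_smul_E h).symm.trans (S.hadPowE1_eq_sum_smul_A h)) x) y
  rw [S.sum_smul_E_eq_sum_smul_A, Matrix.smul_apply, S.sum_smul_A_apply _ hxy,
    S.sum_smul_A_apply _ hxy, smul_eq_mul,
    inv_mul_eq_iff_eq_mul₀ (by exact_mod_cast S.card_ne_zero)] at hE
  exact_mod_cast hE

lemma E_mul_hadPowE1 (k : Fin (d + 1)) (h : ℕ) :
    S.E k * S.hadPowE1 h = (S.hadPowE1Coeff h k : ℂ) • S.E k := by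
  rw [S.hadPowE1_eq_sum_smul_E, S.E_mul_sum_smul_E]

lemma mem_N_iff {h : ℕ} {k : Fin (d + 1)} :
    k ∈ S.N h ↔ S.hadPowE1Coeff h k ≠ 0 ∧ ∀ l < h, S.hadPowE1Coeff l k = 0 := by
  have hE : ∀ l, S.E k * S.hadPowE1 l = 0 ↔ S.hadPowE1Coeff l k = 0 := fun l => by
    simp [S.E_mul_hadPowE1, S.E_ne_zero k]
  simp only [N, Set.mem_ofPred_eq, ne_eq, hE]

lemma hadPowE1Coeff_succ_ne_zero_iff {h : ℕ} {k : Fin (d + 1)} :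
    S.hadPowE1Coeff (h + 1) k ≠ 0 ↔ ∃ j, S.hadPowE1Coeff h j ≠ 0 ∧ S.krein j 1 k ≠ 0 := by
  have hn : (Fintype.card V : ℝ)⁻¹ ≠ 0 := inv_ne_zero S.card_ne_zero
  rw [hadPowE1Coeff, Ne, mul_eq_zero, not_or, Finset.sum_eq_zero_iff_of_nonneg fun j _ =>
    mul_nonneg (S.hadPowE1Coeff_nonneg h j) (S.krein_nonneg j 1 k)]
  simp [hn]

lemma zero_mem_N_zero : (0 : Fin (d + 1)) ∈ S.N 0 := by
  rw [mem_N_iff]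
  simp [hadPowE1Coeff, S.card_ne_zero]

lemma one_mem_N_one (hd : 1 ≤ d) : (1 : Fin (d + 1)) ∈ S.N 1 := by
  have h10 : (1 : Fin (d + 1)) ≠ 0 := by
    rw [Ne, Fin.ext_iff, Fin.val_one', Fin.val_zero, Nat.mod_eq_of_lt (by omega)]
    omega
  have hE1 : S.hadPowE1 1 = S.E 1 := by
    ext x y
    simp [hadPowE1]
  refine ⟨by simpa [hE1, S.E_mul] using S.E_ne_zero 1, fun l hl => ?_⟩
  obtain rfl : l = 0 := by omega
  simp [S.E_mul_hadPowE1, hadPowE1Coeff, h10]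

lemma eq_of_mem_N_of_mem_N {h l : ℕ} {k : Fin (d + 1)} (hh : k ∈ S.N h) (hl : k ∈ S.N l) :
    h = l := by
  rw [mem_N_iff] at hh hl
  by_contra hne
  rcases Nat.lt_or_gt_of_ne hne with hlt | hlt
  · exact hh.1 (hl.2 h hlt)
  · exact hl.1 (hh.2 l hlt)

lemma exists_le_mem_N {h : ℕ} {k : Fin (d + 1)} (hk : S.hadPowE1Coeff h k ≠ 0) :
    ∃ l ≤ h, k ∈ S.N l := by
  classical
  have hex : ∃ l, S.hadPowE1Coeff l k ≠ 0 := ⟨h, hk⟩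
  refine ⟨Nat.find hex, Nat.find_min' hex hk, S.mem_N_iff.mpr ⟨Nat.find_spec hex, fun l hl => ?_⟩⟩
  simpa using Nat.find_min hex hl

lemma N_eq_empty_succ_succ {h : ℕ} (hN : S.N (h + 1) = ∅) : S.N (h + 2) = ∅ := by
  refine Set.eq_empty_of_forall_notMem fun k hk => ?_
  obtain ⟨j, hj, hjk⟩ := S.hadPowE1Coeff_succ_ne_zero_iff.mp (S.mem_N_iff.mp hk).1
  obtain ⟨l, hl, hjl⟩ := S.exists_le_mem_N hj
  have hlh : l ≤ h := by
    rcases hl.lt_or_eq with hl | rfl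
    · omega
    · simp [hN] at hjl
  exact S.hadPowE1Coeff_succ_ne_zero_iff.mpr ⟨j, (S.mem_N_iff.mp hjl).1, hjk⟩
    ((S.mem_N_iff.mp hk).2 (l + 1) (by omega))

lemma N_nonempty_of_le {h m : ℕ} (hm : (S.N m).Nonempty) (hhm : h ≤ m) (hh : 1 ≤ h) :
    (S.N h).Nonempty := by
  rw [Set.nonempty_iff_ne_empty] at hm ⊢
  intro hempty
  have hN : ∀ i, S.N (h - 1 + i + 1) = ∅ := fun i => by
    induction i with
    | zero => simpa [Nat.sub_add_cancel hh] using hempty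
    | succ i ih => exact S.N_eq_empty_succ_succ ih
  exact hm (by simpa [show h - 1 + (m - h) + 1 = m by omega] using hN (m - h))

lemma exists_perm_N_eq_singleton (hN : (S.N d).Nonempty) :
    ∃ σ : Equiv.Perm (Fin (d + 1)), ∀ h : Fin (d + 1), S.N h = {σ h} := by
  have hne : ∀ h : Fin (d + 1), (S.N h).Nonempty := fun h => by
    rcases Nat.eq_zero_or_pos h with h0 | hpos
    · exact ⟨0, by rw [h0]; exact S.zero_mem_N_zero⟩
    · exact S.N_nonempty_of_le hN (by omega) hpos
  choose σ hσ using hne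
  have hinj : Function.Injective σ := fun a b hab =>
    Fin.ext (S.eq_of_mem_N_of_mem_N (hσ a) (hab ▸ hσ b))
  let e := Equiv.ofBijective σ (Finite.injective_iff_bijective.mp hinj)
  refine ⟨e, fun h => Set.eq_singleton_iff_unique_mem.mpr ⟨hσ h, fun k hk => ?_⟩⟩
  have hk' : k ∈ S.N (e.symm k) := by
    simpa only [e, Equiv.ofBijective_apply_symm_apply] using hσ (e.symm k)
  have : e.symm k = h := Fin.ext (S.eq_of_mem_N_of_mem_N hk' hk)
  simpa using congrArg e this

def HasQPolyDegree (k : Fin (d + 1)) (h : ℕ) : Prop :=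
  ∃ v : ℝ[X], v.degree = h ∧ ∀ j, S.Q k j = v.eval (S.Q 1 j)

lemma hasQPolyDegree_of_hadPowE1Coeff {h : ℕ} {k₀ : Fin (d + 1)}
    (hk₀ : S.hadPowE1Coeff h k₀ ≠ 0)
    (hlow : ∀ k ≠ k₀, S.hadPowE1Coeff h k ≠ 0 → ∃ l < h, S.HasQPolyDegree k l) :
    S.HasQPolyDegree k₀ h := by
  have hsum := S.sum_hadPowE1Coeff_mul_Q h
  set n : ℝ := (Fintype.card V : ℝ)
  set c := S.hadPowE1Coeff h
  have hw : ∀ k ≠ k₀, ∃ w : ℝ[X], w ∈ degreeLT ℝ h ∧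
      ∀ j, c k * w.eval (S.Q 1 j) = c k * S.Q k j := fun k hk => by
    by_cases hck : c k = 0
    · exact ⟨0, Submodule.zero_mem _, by simp [hck]⟩
    obtain ⟨l, hlh, v, hv, hvQ⟩ := hlow k hk hck
    exact ⟨v, mem_degreeLT.mpr (hv ▸ by exact_mod_cast hlh), fun j => by rw [hvQ]⟩
  choose! w hwdeg hweval using hw
  set r := ∑ k ∈ Finset.univ.erase k₀, c k • w k
  have hr : r.degree < h := mem_degreeLT.mp <|
    Submodule.sum_mem _ fun k hk => Submodule.smul_mem _ _ (hwdeg k (Finset.ne_of_mem_erase hk))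
  have hn : n / n ^ h ≠ 0 := div_ne_zero S.card_ne_zero (pow_ne_zero _ S.card_ne_zero)
  -- solve `∑_k c_h(k) q_k = |X|^{1-h} q_1^h` for `q_{k₀}`
  refine ⟨C (c k₀)⁻¹ * (C (n / n ^ h) * X ^ h - r), ?_, fun j => ?_⟩
  · rw [degree_C_mul (inv_ne_zero hk₀), degree_sub_eq_left_of_degree_lt, degree_C_mul_X_pow _ hn]
    rwa [degree_C_mul_X_pow _ hn]
  · have hsumj := hsum j
    rw [← Finset.add_sum_erase _ _ (Finset.mem_univ k₀), div_pow] at hsumj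
    have hrj : r.eval (S.Q 1 j) = ∑ k ∈ Finset.univ.erase k₀, c k * S.Q k j := by
      simp only [r, eval_finsetSum, eval_smul, smul_eq_mul]
      exact Finset.sum_congr rfl fun k hk => hweval k (Finset.ne_of_mem_erase hk) j
    rw [eval_mul, eval_C, eval_sub, eval_mul, eval_C, eval_pow, eval_X, hrj,
      eq_inv_mul_iff_mul_eq₀ hk₀]
    field_simp at hsumj ⊢
    linarith

lemma hadPowE1Coeff_ne_zero_iff_of_hasQPolyDegree {h : ℕ} {k k' : Fin (d + 1)}
    (hk' : S.HasQPolyDegree k' h) (hk : ∀ l < h, S.hadPowE1Coeff l k = 0) :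
    S.hadPowE1Coeff h k ≠ 0 ↔ k = k' := by
  obtain ⟨v, hv, hvQ⟩ := hk'
  have hn : (Fintype.card V : ℝ) ≠ 0 := S.card_ne_zero
  have hvh : v.natDegree = h := natDegree_eq_of_degree_eq_some hv
  have hlead : v.coeff h ≠ 0 := coeff_ne_zero_of_eq_degree hv
  -- `q_1^l = |X|^{l-1} ∑_k c_l(k) q_k`, so `a` is the coordinate vector of `q_{k'} = v(q_1)`
  -- with respect to the rows of `Q`
  set a : Fin (d + 1) → ℝ := fun k => ∑ l ∈ Finset.range (h + 1),
    v.coeff l * (Fintype.card V ^ l / Fintype.card V) * S.hadPowE1Coeff l k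
  have ha : a = fun k => if k = k' then 1 else 0 := by
    refine S.eq_of_forall_sum_mul_Q_eq fun j => ?_
    simp only [a, ite_mul, one_mul, zero_mul, Finset.sum_ite_eq', Finset.mem_univ, if_true,
      hvQ, eval_eq_sum_range, hvh, Finset.sum_mul]
    rw [Finset.sum_comm]
    refine Finset.sum_congr rfl fun l _ => ?_
    simp only [mul_assoc, ← Finset.mul_sum, S.sum_hadPowE1Coeff_mul_Q, div_pow]
    field_simp
  have hak : a k = v.coeff h * (Fintype.card V ^ h / Fintype.card V) * S.hadPowE1Coeff h k := by
    simp only [a, Finset.sum_range_succ]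
    rw [Finset.sum_eq_zero fun l hl => by rw [hk l (Finset.mem_range.mp hl), mul_zero], zero_add]
  have := congrFun ha k
  rw [hak] at this
  have hnh : (Fintype.card V : ℝ) ^ h / Fintype.card V ≠ 0 := div_ne_zero (pow_ne_zero _ hn) hn
  constructor
  · intro hc
    by_contra hne
    simp [hne, hlead, hnh, hc] at this
  · rintro rfl hc
    simp [hc] at this

lemma mem_N_of_isQPolyOrdering {σ : Equiv.Perm (Fin (d + 1))} (hσ : S.IsQPolyOrdering σ) :
    σ (Fin.last d) ∈ S.N d := by
  have hzero : ∀ l : ℕ, ∀ m : Fin (d + 1), l < m → S.hadPowE1Coeff l (σ m) = 0 := by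
    intro l
    induction l using Nat.strong_induction_on with
    | _ l ih =>
      intro m hlm
      have hpoly : S.HasQPolyDegree (σ ⟨l, by omega⟩) l := hσ ⟨l, by omega⟩
      have hl := S.hadPowE1Coeff_ne_zero_iff_of_hasQPolyDegree hpoly
        fun l' hl' => ih l' hl' m (by omega)
      by_contra hne
      exact (Fin.ne_of_gt hlm) (σ.injective (hl.mp hne))
  rw [mem_N_iff]
  exact ⟨(S.hadPowE1Coeff_ne_zero_iff_of_hasQPolyDegree (hσ (Fin.last d))
    fun l hl => hzero l _ hl).mpr rfl, fun l hl => hzero l _ hl⟩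

lemma isQPolyE1_of_N_nonempty (hd : 1 ≤ d) (hN : (S.N d).Nonempty) : S.IsQPolyE1 := by
  obtain ⟨σ, hσ⟩ := S.exists_perm_N_eq_singleton hN
  have hval1 : ((1 : Fin (d + 1)) : ℕ) = 1 := by
    rw [Fin.val_one', Nat.mod_eq_of_lt (by omega)]
  have hpoly : ∀ l : ℕ, ∀ h : Fin (d + 1), h = l → S.HasQPolyDegree (σ h) h := by
    intro l
    induction l using Nat.strong_induction_on with
    | _ l ih =>
      rintro h rfl
      have hσh := S.mem_N_iff.mp (hσ h ▸ Set.mem_singleton (σ h))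
      refine S.hasQPolyDegree_of_hadPowE1Coeff hσh.1 fun k hk hck => ?_
      obtain ⟨l, hlh, hkl⟩ := S.exists_le_mem_N hck
      have hlt : l < h := lt_of_le_of_ne hlh fun hl => hk (by simpa [hσ h, hl] using hkl)
      have hk' : k = σ ⟨l, by omega⟩ := by simpa [hσ ⟨l, by omega⟩] using hkl
      exact ⟨l, hlt, hk' ▸ ih l hlt _ rfl⟩
  refine ⟨σ, ?_, ?_, fun h => hpoly h h rfl⟩
  · have hN0 := hσ 0
    rw [Fin.val_zero] at hN0
    exact (hN0 ▸ S.zero_mem_N_zero).symm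
  · have hN1 := hσ 1
    rw [hval1] at hN1
    exact (hN1 ▸ S.one_mem_N_one hd).symm

end SymmAssocScheme

/-- Lemma 2. For a symmetric association scheme of class `d ≥ 2`,
the following are equivalent: (1) `𝔛` is `Q`-polynomial with respect to `E_1`;
(2) `|N_d| = 1`; (3) `N_d` is nonempty. -/
theorem statement4 {d : ℕ} {V : Type*} [Fintype V] [DecidableEq V]
    (S : SymmAssocScheme d V) (hd : 2 ≤ d) :
    (S.IsQPolyE1 ↔ (S.N d).ncard = 1) ∧ ((S.N d).ncard = 1 ↔ (S.N d).Nonempty) := by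
  have h13 : S.IsQPolyE1 → (S.N d).Nonempty := fun ⟨_, _, _, hσ⟩ =>
    ⟨_, S.mem_N_of_isQPolyOrdering hσ⟩
  have h31 : (S.N d).Nonempty → S.IsQPolyE1 := S.isQPolyE1_of_N_nonempty (by omega)
  have h32 : (S.N d).Nonempty → (S.N d).ncard = 1 := fun hN => by
    obtain ⟨σ, hσ⟩ := S.exists_perm_N_eq_singleton hN
    simpa using congrArg Set.ncard (hσ (Fin.last d))
  have h23 : (S.N d).ncard = 1 → (S.N d).Nonempty := fun h =>
    Set.nonempty_of_ncard_ne_zero (by omega)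
  exact ⟨⟨fun h => h32 (h13 h), fun h => h31 (h23 h)⟩, h23, h32⟩
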